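/- Let (Y, W) have joint density f(y,w) = (2π)^{-p/2}|Σ|^{-1/2} w^{-p/2} exp(-w - (1/(2w)) yᵀΣ⁻¹y) on ℝ^p × (0,∞) with Σ positive definite. Then the conditional expectation of 1/W given Y = y equals (yᵀΣ⁻¹y/2)^{-1/2} · K_{ν-1}(√(2 yᵀΣ⁻¹y)) / K_ν(√(2 yᵀΣ⁻¹y)), where ν = (2-p)/2. -/
import Mathlib


open MeasureTheory Matrix

/-- The modified Bessel function of the third kind,
`K_ν(x) = ½ (x/2)^ν ∫₀^∞ t^{-ν-1} exp(-t - x²/(4t)) dt`. -/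
noncomputable def besselK (ν x : ℝ) : ℝ :=
  (1/2) * (x/2) ^ ν * ∫ t in Set.Ioi (0:ℝ), t ^ (-ν - 1) * Real.exp (-t - x^2 / (4*t))

noncomputable def Jint (a q : ℝ) : ℝ :=
  ∫ t in Set.Ioi (0:ℝ), t ^ a * Real.exp (-t - q/(2*t))

lemma Jsymm (a : ℝ) {q : ℝ} (hq : 0 < q) :
    Jint a q = (q/2) ^ (a+1) * Jint (-a-2) q := by
  have h2q : 0 < q/2 := by positivity
  have hb : (0:ℝ) < 2/q := by positivity
  set g : ℝ → ℝ := fun t => t ^ a * Real.exp (-t - q/(2*t)) with hg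
  have key := MeasureTheory.integral_comp_rpow_Ioi g (p := (-1:ℝ)) (by norm_num)
  have key2 := MeasureTheory.integral_comp_mul_left_Ioi
      (fun x => (|(-1:ℝ)| * x ^ ((-1:ℝ)-1)) • g (x ^ (-1:ℝ))) 0 hb
  rw [mul_zero] at key2
  have key2' : ((2/q : ℝ)) • (∫ x in Set.Ioi (0:ℝ),
      (|(-1:ℝ)| * ((2/q)*x) ^ ((-1:ℝ)-1)) • g (((2/q)*x) ^ (-1:ℝ)))
      = ∫ x in Set.Ioi (0:ℝ), (|(-1:ℝ)| * x ^ ((-1:ℝ)-1)) • g (x ^ (-1:ℝ)) := by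
    rw [key2, smul_smul, mul_inv_cancel₀ hb.ne', one_smul]
  have e3 : (∫ x in Set.Ioi (0:ℝ), (|(-1:ℝ)| * ((2/q)*x) ^ ((-1:ℝ)-1)) • g (((2/q)*x) ^ (-1:ℝ)))
      = ∫ x in Set.Ioi (0:ℝ), (q/2)^(a+2) * (x ^ (-a-2) * Real.exp (-x - q/(2*x))) := by
    refine setIntegral_congr_fun measurableSet_Ioi fun x hx => ?_
    have hx' : (0:ℝ) < x := hx
    have hx0 : x ≠ 0 := hx'.ne'
    have hq0 : q ≠ 0 := hq.ne'
    simp only [hg, smul_eq_mul]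
    have einv : ((2/q)*x) ^ (-1:ℝ) = (q/2) * x⁻¹ := by
      rw [Real.rpow_neg_one, mul_inv, inv_div]
    have eexp : -((q/2)*x⁻¹) - q/(2*((q/2)*x⁻¹)) = -x - q/(2*x) := by
      field_simp
      ring
    have epow1 : ((q/2)*x⁻¹) ^ a = (q/2)^a * x ^ (-a) := by
      rw [Real.mul_rpow h2q.le (inv_nonneg.2 hx'.le), Real.inv_rpow hx'.le,
        ← Real.rpow_neg hx'.le]
    have epow2 : ((2/q)*x) ^ ((-1:ℝ)-1) = (q/2)^(2:ℝ) * x ^ (-2:ℝ) := by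
      rw [show ((-1:ℝ)-1) = (-2:ℝ) by norm_num, Real.mul_rpow hb.le hx'.le]
      congr 1
      rw [show (2/q:ℝ) = (q/2)⁻¹ by rw [inv_div], Real.inv_rpow h2q.le,
        ← Real.rpow_neg h2q.le, neg_neg]
    rw [einv, epow2, epow1, eexp,
      show (q/2:ℝ)^(a+2) = (q/2)^a * (q/2)^(2:ℝ) from Real.rpow_add h2q a 2,
      show (x:ℝ)^(-a-2) = x^(-a) * x^(-2:ℝ) from by
        rw [show (-a-2:ℝ) = -a + -2 by ring, Real.rpow_add hx']]
    rw [abs_neg, abs_one]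
    ring
  calc Jint a q = ∫ x in Set.Ioi (0:ℝ), (|(-1:ℝ)| * x ^ ((-1:ℝ)-1)) • g (x ^ (-1:ℝ)) := key.symm
    _ = ((2/q : ℝ)) • (∫ x in Set.Ioi (0:ℝ),
          (|(-1:ℝ)| * ((2/q)*x) ^ ((-1:ℝ)-1)) • g (((2/q)*x) ^ (-1:ℝ))) := key2'.symm
    _ = ((2/q : ℝ)) • ∫ x in Set.Ioi (0:ℝ),
          (q/2)^(a+2) * (x ^ (-a-2) * Real.exp (-x - q/(2*x))) := by rw [e3]
    _ = (q/2) ^ (a+1) * Jint (-a-2) q := by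
        rw [integral_const_mul, smul_eq_mul,
          show Jint (-a-2) q = ∫ x in Set.Ioi (0:ℝ),
            x ^ (-a-2) * Real.exp (-x - q/(2*x)) from rfl,
          show (a+2:ℝ) = (a+1)+1 by ring, Real.rpow_add_one h2q.ne' (a+1)]
        field_simp

lemma besselK_eq_Jint (ν : ℝ) {q : ℝ} (hq : 0 < q) :
    besselK ν (Real.sqrt (2*q)) = (1/2) * (Real.sqrt (2*q)/2) ^ ν * Jint (-ν-1) q := by
  unfold besselK Jint
  congr 1
  refine setIntegral_congr_fun measurableSet_Ioi fun t ht => ?_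
  have ht' : (0:ℝ) < t := ht
  rw [Real.sq_sqrt (by positivity)]
  congr 2
  field_simp
  ring

theorem condExp_inv_w {p : ℕ} (S : Matrix (Fin p) (Fin p) ℝ) (hS : S.PosDef)
    (y : Fin p → ℝ) (hy : 0 < y ⬝ᵥ (S⁻¹ *ᵥ y)) :
    (∫ w in Set.Ioi (0:ℝ), (1/w) *
        ((2*Real.pi) ^ (-(p:ℝ)/2) * S.det ^ (-(1:ℝ)/2) * w ^ (-(p:ℝ)/2) *
          Real.exp (-w - (1/(2*w)) * (y ⬝ᵥ (S⁻¹ *ᵥ y))))) /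
    (∫ w in Set.Ioi (0:ℝ),
        (2*Real.pi) ^ (-(p:ℝ)/2) * S.det ^ (-(1:ℝ)/2) * w ^ (-(p:ℝ)/2) *
          Real.exp (-w - (1/(2*w)) * (y ⬝ᵥ (S⁻¹ *ᵥ y))))
    = ((y ⬝ᵥ (S⁻¹ *ᵥ y)) / 2) ^ (-(1:ℝ)/2) *
        (besselK ((2 - (p:ℝ))/2 - 1) (Real.sqrt (2 * (y ⬝ᵥ (S⁻¹ *ᵥ y)))) /
         besselK ((2 - (p:ℝ))/2) (Real.sqrt (2 * (y ⬝ᵥ (S⁻¹ *ᵥ y))))) := by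
  set q : ℝ := y ⬝ᵥ (S⁻¹ *ᵥ y) with hqdef
  have hq : 0 < q := hy
  have hdet : 0 < S.det := hS.det_pos
  set c : ℝ := (2*Real.pi) ^ (-(p:ℝ)/2) * S.det ^ (-(1:ℝ)/2) with hc
  have hcpos : 0 < c := by
    have := Real.pi_pos
    rw [hc]
    positivity
  have h2q : 0 < q/2 := by positivity
  have hnum : (∫ w in Set.Ioi (0:ℝ), (1/w) * (c * w ^ (-(p:ℝ)/2) *
        Real.exp (-w - (1/(2*w)) * q)))
      = c * Jint (-(p:ℝ)/2 - 1) q := by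
    rw [show (∫ w in Set.Ioi (0:ℝ), (1/w) * (c * w ^ (-(p:ℝ)/2) *
          Real.exp (-w - (1/(2*w)) * q)))
        = ∫ w in Set.Ioi (0:ℝ), c * (w ^ (-(p:ℝ)/2 - 1) * Real.exp (-w - q/(2*w))) from
      setIntegral_congr_fun measurableSet_Ioi fun w hw => by
        have hw' : (0:ℝ) < w := hw
        rw [Real.rpow_sub hw', Real.rpow_one,
          show -w - (1/(2*w)) * q = -w - q/(2*w) by ring]
        ring]
    rw [integral_const_mul]
    rfl
  have hden : (∫ w in Set.Ioi (0:ℝ), c * w ^ (-(p:ℝ)/2) *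
        Real.exp (-w - (1/(2*w)) * q))
      = c * Jint (-(p:ℝ)/2) q := by
    rw [show (∫ w in Set.Ioi (0:ℝ), c * w ^ (-(p:ℝ)/2) *
          Real.exp (-w - (1/(2*w)) * q))
        = ∫ w in Set.Ioi (0:ℝ), c * (w ^ (-(p:ℝ)/2) * Real.exp (-w - q/(2*w))) from
      setIntegral_congr_fun measurableSet_Ioi fun w hw => by
        rw [show -w - (1/(2*w)) * q = -w - q/(2*w) by ring]
        ring]
    rw [integral_const_mul]
    rfl
  rw [hnum, hden, mul_div_mul_left _ _ hcpos.ne']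
  rw [show Jint (-(p:ℝ)/2 - 1) q = (q/2) ^ (-(p:ℝ)/2) * Jint ((p:ℝ)/2 - 1) q from by
      rw [Jsymm (-(p:ℝ)/2 - 1) hq,
        show ((-(p:ℝ)/2 - 1) + 1) = -(p:ℝ)/2 by ring,
        show (-(-(p:ℝ)/2 - 1) - 2) = (p:ℝ)/2 - 1 by ring],
    show Jint (-(p:ℝ)/2) q = (q/2) ^ (-(p:ℝ)/2 + 1) * Jint ((p:ℝ)/2 - 2) q from by
      rw [Jsymm (-(p:ℝ)/2) hq,
        show ((-(p:ℝ)/2) + 1) = -(p:ℝ)/2 + 1 by ring,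
        show (-(-(p:ℝ)/2) - 2) = (p:ℝ)/2 - 2 by ring]]
  rw [besselK_eq_Jint _ hq, besselK_eq_Jint _ hq,
    show (-((2 - (p:ℝ))/2 - 1) - 1) = (p:ℝ)/2 - 1 by ring,
    show (-((2 - (p:ℝ))/2) - 1) = (p:ℝ)/2 - 2 by ring]
  rw [mul_div_mul_comm, mul_div_mul_comm]
  have hs : Real.sqrt (2*q) / 2 = (q/2) ^ ((1:ℝ)/2) := by
    rw [show (2*q:ℝ) = 2^2 * (q/2) by ring, Real.sqrt_mul (by positivity),
      Real.sqrt_sq (by norm_num), Real.sqrt_eq_rpow]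
    ring
  rw [hs]
  have hAC : (q/2:ℝ)^(-(p:ℝ)/2) / (q/2)^(-(p:ℝ)/2+1)
      = (q/2)^(-(1:ℝ)/2) *
        ((1/2 * ((q/2:ℝ)^((1:ℝ)/2)) ^ ((2 - (p:ℝ))/2 - 1)) /
         (1/2 * ((q/2:ℝ)^((1:ℝ)/2)) ^ ((2 - (p:ℝ))/2))) := by
    rw [mul_div_mul_left _ _ (by norm_num : (1/2:ℝ) ≠ 0),
      ← Real.rpow_mul h2q.le, ← Real.rpow_mul h2q.le,
      ← Real.rpow_sub h2q, ← Real.rpow_sub h2q, ← Real.rpow_add h2q]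
    congr 1
    ring
  rw [← mul_assoc, ← hAC]
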